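/- Let g₀, g₁ : S² → ℝ be continuous functions with 0 < g₁(ϑ) < g₀(ϑ) for every ϑ ∈ S². Then there exist δ > 0 and a function f : [0,1] × S² → [0, ∞) such that: (a) √f is continuous on [0,1] × S², is infinitely differentiable in the variable x ∈ [0,1], and every partial derivative ∂ₓⁿ√f is continuous on [0,1] × S²; (b) ∂ₓⁿ f(1, ϑ) = 0 for every integer n ≥ 0 and every ϑ ∈ S²; (c) for every x ∈ [0,1] there exists a point ϑ₀(x) ∈ S² such that f(x, ϑ) = 0 whenever |ϑ − ϑ₀(x)| ≤ δ or |ϑ + ϑ₀(x)| ≤ δ; (d) ∫₀¹ f(x, ϑ) dx = g₀(ϑ) and ∫₀¹∫₀ˣ f(y, ϑ) dy dx = g₁(ϑ) for every ϑ ∈ S². -/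

import Mathlib

open MeasureTheory

open scoped RealInnerProductSpace
open MeasureTheory intervalIntegral Set

noncomputable def mmBump (a c x : ℝ) : ℝ := expNegInvGlue (x - a) * expNegInvGlue (c - x)

lemma mmBump_nonneg (a c x : ℝ) : 0 ≤ mmBump a c x :=
  mul_nonneg (expNegInvGlue.nonneg _) (expNegInvGlue.nonneg _)

lemma mmBump_smooth (a c : ℝ) : ContDiff ℝ (⊤ : ℕ∞) (mmBump a c) :=
  (expNegInvGlue.contDiff.comp (contDiff_id.sub contDiff_const)).mul
    (expNegInvGlue.contDiff.comp (contDiff_const.sub contDiff_id))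

lemma mmBump_zero_left {a c x : ℝ} (h : x ≤ a) : mmBump a c x = 0 := by
  unfold mmBump; rw [expNegInvGlue.zero_of_nonpos (by linarith), zero_mul]

lemma mmBump_zero_right {a c x : ℝ} (h : c ≤ x) : mmBump a c x = 0 := by
  unfold mmBump
  rw [expNegInvGlue.zero_of_nonpos (show c - x ≤ 0 by linarith), mul_zero]

lemma mmBump_pos {a c x : ℝ} (h1 : a < x) (h2 : x < c) : 0 < mmBump a c x :=
  mul_pos (expNegInvGlue.pos_of_pos (by linarith)) (expNegInvGlue.pos_of_pos (by linarith))

noncomputable def mmH (a c : ℝ) : ℝ := ∫ x in (0:ℝ)..1, (mmBump a c x)^2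
noncomputable def mmB (a c x : ℝ) : ℝ := ∫ y in (0:ℝ)..x, (mmBump a c y)^2
noncomputable def mmK (a c : ℝ) : ℝ := ∫ x in (0:ℝ)..1, mmB a c x

lemma mmBump_sq_cont (a c : ℝ) : Continuous fun x => (mmBump a c x)^2 :=
  ((mmBump_smooth a c).continuous).pow 2

lemma mmB_cont (a c : ℝ) : Continuous (mmB a c) :=
  intervalIntegral.continuous_primitive (fun _ _ => (mmBump_sq_cont a c).intervalIntegrable _ _) 0

lemma mmH_pos {a c : ℝ} (ha : 0 ≤ a) (hac : a < c) (hc : c ≤ 1) : 0 < mmH a c := by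
  have hint : ∀ u v : ℝ, IntervalIntegrable (fun x => (mmBump a c x)^2) volume u v :=
    fun u v => (mmBump_sq_cont a c).intervalIntegrable u v
  have h1 : mmH a c = (∫ x in (0:ℝ)..a, (mmBump a c x)^2) + ((∫ x in a..c, (mmBump a c x)^2)
      + ∫ x in c..(1:ℝ), (mmBump a c x)^2) := by
    rw [integral_add_adjacent_intervals (hint a c) (hint c 1),
      integral_add_adjacent_intervals (hint 0 a) (hint a 1)]
    rfl
  have h2 : 0 < ∫ x in a..c, (mmBump a c x)^2 := by
    apply intervalIntegral_pos_of_pos_on (hint a c) _ hac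
    intro x hx
    exact pow_pos (mmBump_pos hx.1 hx.2) 2
  have h3 : 0 ≤ ∫ x in (0:ℝ)..a, (mmBump a c x)^2 :=
    intervalIntegral.integral_nonneg ha (fun u _ => sq_nonneg _)
  have h4 : 0 ≤ ∫ x in c..(1:ℝ), (mmBump a c x)^2 :=
    intervalIntegral.integral_nonneg hc (fun u _ => sq_nonneg _)
  linarith

lemma mmB_nonneg {a c x : ℝ} (hx : 0 ≤ x) : 0 ≤ mmB a c x :=
  intervalIntegral.integral_nonneg hx (fun u _ => sq_nonneg _)

lemma mmB_zero {a c x : ℝ} (hx0 : 0 ≤ x) (hx : x ≤ a) : mmB a c x = 0 := by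
  unfold mmB
  rw [intervalIntegral.integral_congr (g := fun _ => (0:ℝ))]
  · simp
  · intro y hy
    rw [uIcc_of_le hx0] at hy
    have : mmBump a c y = 0 := mmBump_zero_left (le_trans hy.2 hx)
    simp [this]

lemma mmB_eq_H {a c x : ℝ} (hx : c ≤ x) (hx1 : x ≤ 1) : mmB a c x = mmH a c := by
  have hint : ∀ u v : ℝ, IntervalIntegrable (fun x => (mmBump a c x)^2) volume u v :=
    fun u v => (mmBump_sq_cont a c).intervalIntegrable u v
  have h1 : mmB a c x + (∫ y in x..(1:ℝ), (mmBump a c y)^2) = mmH a c :=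
    integral_add_adjacent_intervals (hint 0 x) (hint x 1)
  have h2 : (∫ y in x..(1:ℝ), (mmBump a c y)^2) = 0 := by
    rw [intervalIntegral.integral_congr (g := fun _ => (0:ℝ))]
    · simp
    · intro y hy
      rw [uIcc_of_le hx1] at hy
      have : mmBump a c y = 0 := mmBump_zero_right (le_trans hx hy.1)
      simp [this]
  linarith

lemma mmB_le_H {a c x : ℝ} (hx0 : 0 ≤ x) (hx1 : x ≤ 1) : mmB a c x ≤ mmH a c := by
  have hint : ∀ u v : ℝ, IntervalIntegrable (fun x => (mmBump a c x)^2) volume u v :=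
    fun u v => (mmBump_sq_cont a c).intervalIntegrable u v
  have h1 : mmB a c x + (∫ y in x..(1:ℝ), (mmBump a c y)^2) = mmH a c :=
    integral_add_adjacent_intervals (hint 0 x) (hint x 1)
  have h2 : 0 ≤ ∫ y in x..(1:ℝ), (mmBump a c y)^2 :=
    intervalIntegral.integral_nonneg hx1 (fun u _ => sq_nonneg _)
  linarith

lemma mmK_ge {a c : ℝ} (ha : 0 ≤ a) (hac : a < c) (hc : c ≤ 1) :
    (1 - c) * mmH a c ≤ mmK a c := by
  have hBi : ∀ u v : ℝ, IntervalIntegrable (mmB a c) volume u v :=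
    fun u v => (mmB_cont a c).intervalIntegrable u v
  have h1 : (∫ x in (0:ℝ)..c, mmB a c x) + (∫ x in c..(1:ℝ), mmB a c x) = mmK a c :=
    integral_add_adjacent_intervals (hBi 0 c) (hBi c 1)
  have h2 : (∫ x in c..(1:ℝ), mmB a c x) = (1 - c) * mmH a c := by
    rw [intervalIntegral.integral_congr (g := fun _ => mmH a c)]
    · simp [smul_eq_mul]
    · intro y hy
      rw [uIcc_of_le hc] at hy
      exact mmB_eq_H hy.1 hy.2
  have h3 : 0 ≤ ∫ x in (0:ℝ)..c, mmB a c x :=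
    intervalIntegral.integral_nonneg (by linarith) (fun u hu => mmB_nonneg hu.1)
  linarith

lemma mmK_le {a c : ℝ} (ha : 0 ≤ a) (hac : a < c) (hc : c ≤ 1) :
    mmK a c ≤ (1 - a) * mmH a c := by
  have hBi : ∀ u v : ℝ, IntervalIntegrable (mmB a c) volume u v :=
    fun u v => (mmB_cont a c).intervalIntegrable u v
  have h1 : (∫ x in (0:ℝ)..a, mmB a c x) + (∫ x in a..(1:ℝ), mmB a c x) = mmK a c :=
    integral_add_adjacent_intervals (hBi 0 a) (hBi a 1)
  have h2 : (∫ x in (0:ℝ)..a, mmB a c x) = 0 := by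
    rw [intervalIntegral.integral_congr (g := fun _ => (0:ℝ))]
    · simp
    · intro y hy
      rw [uIcc_of_le ha] at hy
      exact mmB_zero hy.1 hy.2
  have h3 : (∫ x in a..(1:ℝ), mmB a c x) ≤ ∫ x in a..(1:ℝ), mmH a c := by
    apply intervalIntegral.integral_mono_on (by linarith) (hBi a 1)
      (intervalIntegrable_const)
    intro x hx
    exact mmB_le_H (le_trans ha hx.1) hx.2
  have h4 : (∫ x in a..(1:ℝ), mmH a c) = (1 - a) * mmH a c := by
    simp [smul_eq_mul]
  linarith

lemma mm_sqrt_four {u1 u2 u3 u4 b1 b2 b3 b4 : ℝ}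
    (h1 : 0 ≤ u1) (h2 : 0 ≤ u2) (h3 : 0 ≤ u3) (h4 : 0 ≤ u4)
    (hb1 : 0 ≤ b1) (hb2 : 0 ≤ b2) (hb3 : 0 ≤ b3) (hb4 : 0 ≤ b4)
    (hd : (b2 = 0 ∧ b3 = 0 ∧ b4 = 0) ∨ (b1 = 0 ∧ b3 = 0 ∧ b4 = 0) ∨
      (b1 = 0 ∧ b2 = 0 ∧ b4 = 0) ∨ (b1 = 0 ∧ b2 = 0 ∧ b3 = 0)) :
    Real.sqrt (u1 * b1^2 + u2 * b2^2 + u3 * b3^2 + u4 * b4^2)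
      = Real.sqrt u1 * b1 + Real.sqrt u2 * b2 + Real.sqrt u3 * b3 + Real.sqrt u4 * b4 := by
  have key : ∀ u b : ℝ, 0 ≤ u → 0 ≤ b → Real.sqrt (u * b^2) = Real.sqrt u * b := by
    intro u b hu hb
    rw [Real.sqrt_mul hu, Real.sqrt_sq hb]
  rcases hd with ⟨e2,e3,e4⟩|⟨e1,e3,e4⟩|⟨e1,e2,e4⟩|⟨e1,e2,e3⟩ <;>
    simp_all [key _ _ h1 hb1, key _ _ h2 hb2, key _ _ h3 hb3, key _ _ h4 hb4]

lemma mm_iterDW_lin4 (n : ℕ) {x : ℝ} (hx : x ∈ Set.Icc (0:ℝ) 1)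
    {f1 f2 f3 f4 : ℝ → ℝ} (h1 : ContDiff ℝ (⊤:ℕ∞) f1) (h2 : ContDiff ℝ (⊤:ℕ∞) f2)
    (h3 : ContDiff ℝ (⊤:ℕ∞) f3) (h4 : ContDiff ℝ (⊤:ℕ∞) f4)
    (v1 v2 v3 v4 : ℝ) :
    iteratedDerivWithin n (fun y => v1 * f1 y + v2 * f2 y + v3 * f3 y + v4 * f4 y)
        (Set.Icc 0 1) x
      = v1 * iteratedDerivWithin n f1 (Set.Icc 0 1) x
        + v2 * iteratedDerivWithin n f2 (Set.Icc 0 1) x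
        + v3 * iteratedDerivWithin n f3 (Set.Icc 0 1) x
        + v4 * iteratedDerivWithin n f4 (Set.Icc 0 1) x := by
  have U : UniqueDiffOn ℝ (Set.Icc (0:ℝ) 1) := uniqueDiffOn_Icc zero_lt_one
  have c1 : ContDiffOn ℝ n (fun y => v1 * f1 y) (Set.Icc (0:ℝ) 1) :=
    ((contDiff_const.mul h1).contDiffOn).of_le (mod_cast le_top)
  have c2 : ContDiffOn ℝ n (fun y => v2 * f2 y) (Set.Icc (0:ℝ) 1) :=
    ((contDiff_const.mul h2).contDiffOn).of_le (mod_cast le_top)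
  have c3 : ContDiffOn ℝ n (fun y => v3 * f3 y) (Set.Icc (0:ℝ) 1) :=
    ((contDiff_const.mul h3).contDiffOn).of_le (mod_cast le_top)
  have c4 : ContDiffOn ℝ n (fun y => v4 * f4 y) (Set.Icc (0:ℝ) 1) :=
    ((contDiff_const.mul h4).contDiffOn).of_le (mod_cast le_top)
  have e1 : iteratedDerivWithin n
      (fun y => v1 * f1 y + v2 * f2 y + v3 * f3 y + v4 * f4 y) (Set.Icc 0 1) x
      = iteratedDerivWithin n (fun y => v1 * f1 y + v2 * f2 y + v3 * f3 y) (Set.Icc 0 1) x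
        + iteratedDerivWithin n (fun y => v4 * f4 y) (Set.Icc 0 1) x := by
    exact iteratedDerivWithin_add (f := fun y => v1 * f1 y + v2 * f2 y + v3 * f3 y)
      (g := fun y => v4 * f4 y) hx U (((c1.add c2).add c3).contDiffWithinAt hx) (c4.contDiffWithinAt hx)
  have e2 : iteratedDerivWithin n
      (fun y => v1 * f1 y + v2 * f2 y + v3 * f3 y) (Set.Icc 0 1) x
      = iteratedDerivWithin n (fun y => v1 * f1 y + v2 * f2 y) (Set.Icc 0 1) x
        + iteratedDerivWithin n (fun y => v3 * f3 y) (Set.Icc 0 1) x := by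
    exact iteratedDerivWithin_add (f := fun y => v1 * f1 y + v2 * f2 y)
      (g := fun y => v3 * f3 y) hx U ((c1.add c2).contDiffWithinAt hx) (c3.contDiffWithinAt hx)
  have e3 : iteratedDerivWithin n
      (fun y => v1 * f1 y + v2 * f2 y) (Set.Icc 0 1) x
      = iteratedDerivWithin n (fun y => v1 * f1 y) (Set.Icc 0 1) x
        + iteratedDerivWithin n (fun y => v2 * f2 y) (Set.Icc 0 1) x := by
    exact iteratedDerivWithin_add (f := fun y => v1 * f1 y)
      (g := fun y => v2 * f2 y) hx U (c1.contDiffWithinAt hx) (c2.contDiffWithinAt hx)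
  have m1 := iteratedDerivWithin_const_mul hx U v1 ((h1.contDiffOn.of_le (mod_cast le_top) :
    ContDiffOn ℝ n f1 (Set.Icc (0:ℝ) 1)).contDiffWithinAt hx)
  have m2 := iteratedDerivWithin_const_mul hx U v2 ((h2.contDiffOn.of_le (mod_cast le_top) :
    ContDiffOn ℝ n f2 (Set.Icc (0:ℝ) 1)).contDiffWithinAt hx)
  have m3 := iteratedDerivWithin_const_mul hx U v3 ((h3.contDiffOn.of_le (mod_cast le_top) :
    ContDiffOn ℝ n f3 (Set.Icc (0:ℝ) 1)).contDiffWithinAt hx)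
  have m4 := iteratedDerivWithin_const_mul hx U v4 ((h4.contDiffOn.of_le (mod_cast le_top) :
    ContDiffOn ℝ n f4 (Set.Icc (0:ℝ) 1)).contDiffWithinAt hx)
  rw [e1, e2, e3, m1, m2, m3, m4]

lemma mm_iterDW_zero (n : ℕ) {f : ℝ → ℝ} {x : ℝ} (hx : x ∈ Set.Icc (0:ℝ) 1)
    (h : ∀ᶠ y in nhdsWithin x (Set.Icc (0:ℝ) 1), f y = 0) (hfx : f x = 0) :
    iteratedDerivWithin n f (Set.Icc (0:ℝ) 1) x = 0 := by
  have hEq : f =ᶠ[nhdsWithin x (Set.Icc (0:ℝ) 1)] (fun _ => 0) := h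
  rw [iteratedDerivWithin_eq_iteratedFDerivWithin,
    hEq.iteratedFDerivWithin_eq hfx n,
    iteratedFDerivWithin_zero_fun]
  simp

open scoped RealInnerProductSpace in
lemma mm_orth_far {E : Type*} [NormedAddCommGroup E] [InnerProductSpace ℝ E] {u v w : E}
    (hu : ‖u‖ = 1) (hv : ‖v‖ = 1) (huv : ⟪u, v⟫ = 0)
    (h1 : ‖w - u‖ ≤ 1/4) (h2 : ‖w - v‖ ≤ 1/4) : False := by
  have ht : ‖u - v‖ ≤ 1/2 := by
    have huv2 : u - v = -(w - u) + (w - v) := by abel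
    calc ‖u - v‖ = ‖-(w - u) + (w - v)‖ := by rw [huv2]
    _ ≤ ‖-(w - u)‖ + ‖w - v‖ := norm_add_le _ _
    _ = ‖w - u‖ + ‖w - v‖ := by rw [norm_neg]
    _ ≤ 1/2 := by linarith
  have hsq : ‖u - v‖^2 = 2 := by
    rw [norm_sub_sq_real, hu, hv, huv]; ring
  nlinarith [norm_nonneg (u - v)]


set_option maxHeartbeats 1000000 in
/-- The moment-matching construction on `S²` (Lemma `Apx:Lem:hatg2` of the
paper): given continuous `g₀, g₁` on the unit sphere with `0 < g₁ < g₀`, there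
is a nonnegative function `f(x, ϑ)` whose square root is smooth in `x` with
jointly continuous `x`-derivatives, which vanishes to infinite order at
`x = 1`, vanishes on two antipodal spherical caps of a fixed radius `δ` for
each `x`, and matches the two moments `∫₀¹ f dx = g₀` and
`∫₀¹∫₀ˣ f dy dx = g₁`. -/
theorem moment_matching_on_sphere (g₀ g₁ : EuclideanSpace ℝ (Fin 3) → ℝ)
    (hg₀ : ContinuousOn g₀ (Metric.sphere (0 : EuclideanSpace ℝ (Fin 3)) 1))
    (hg₁ : ContinuousOn g₁ (Metric.sphere (0 : EuclideanSpace ℝ (Fin 3)) 1))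
    (hpos : ∀ ϑ ∈ Metric.sphere (0 : EuclideanSpace ℝ (Fin 3)) 1,
      0 < g₁ ϑ ∧ g₁ ϑ < g₀ ϑ) :
    ∃ δ : ℝ, 0 < δ ∧ ∃ f : ℝ → EuclideanSpace ℝ (Fin 3) → ℝ,
      (∀ x ∈ Set.Icc (0 : ℝ) 1, ∀ ϑ ∈ Metric.sphere (0 : EuclideanSpace ℝ (Fin 3)) 1,
        0 ≤ f x ϑ) ∧
      -- (a) regularity of √f
      ContinuousOn (fun p : ℝ × EuclideanSpace ℝ (Fin 3) => Real.sqrt (f p.1 p.2))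
        (Set.Icc (0 : ℝ) 1 ×ˢ Metric.sphere (0 : EuclideanSpace ℝ (Fin 3)) 1) ∧
      (∀ ϑ ∈ Metric.sphere (0 : EuclideanSpace ℝ (Fin 3)) 1,
        ContDiffOn ℝ (⊤ : ℕ∞) (fun x => Real.sqrt (f x ϑ)) (Set.Icc (0 : ℝ) 1)) ∧
      (∀ n : ℕ,
        ContinuousOn
          (fun p : ℝ × EuclideanSpace ℝ (Fin 3) =>
            iteratedDerivWithin n (fun x => Real.sqrt (f x p.2)) (Set.Icc (0 : ℝ) 1) p.1)
          (Set.Icc (0 : ℝ) 1 ×ˢ Metric.sphere (0 : EuclideanSpace ℝ (Fin 3)) 1)) ∧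
      -- (b) infinite-order vanishing at x = 1
      (∀ n : ℕ, ∀ ϑ ∈ Metric.sphere (0 : EuclideanSpace ℝ (Fin 3)) 1,
        iteratedDerivWithin n (fun x => f x ϑ) (Set.Icc (0 : ℝ) 1) 1 = 0) ∧
      -- (c) vanishing on two antipodal caps
      (∀ x ∈ Set.Icc (0 : ℝ) 1, ∃ ϑ₀ ∈ Metric.sphere (0 : EuclideanSpace ℝ (Fin 3)) 1,
        ∀ ϑ ∈ Metric.sphere (0 : EuclideanSpace ℝ (Fin 3)) 1,
          (‖ϑ - ϑ₀‖ ≤ δ ∨ ‖ϑ + ϑ₀‖ ≤ δ) → f x ϑ = 0) ∧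
      -- (d) moment matching
      (∀ ϑ ∈ Metric.sphere (0 : EuclideanSpace ℝ (Fin 3)) 1,
        (∫ x in (0:ℝ)..1, f x ϑ) = g₀ ϑ ∧
        (∫ x in (0:ℝ)..1, ∫ y in (0:ℝ)..x, f y ϑ) = g₁ ϑ) := by
  classical
  set S := Metric.sphere (0 : EuclideanSpace ℝ (Fin 3)) 1 with hSdef
  -- basic positivity
  have hg0pos : ∀ ϑ ∈ S, 0 < g₀ ϑ := fun ϑ h => (hpos ϑ h).1.trans (hpos ϑ h).2
  have hSne : S.Nonempty := NormedSpace.sphere_nonempty.mpr zero_le_one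
  have hscont : ContinuousOn (fun ϑ => g₁ ϑ / g₀ ϑ) S :=
    hg₁.div hg₀ (fun ϑ h => (hg0pos ϑ h).ne')
  obtain ⟨ϑlo, hϑloS, hϑlo'⟩ :=
    (isCompact_sphere (0:EuclideanSpace ℝ (Fin 3)) 1).exists_isMinOn hSne hscont
  obtain ⟨ϑhi, hϑhiS, hϑhi'⟩ :=
    (isCompact_sphere (0:EuclideanSpace ℝ (Fin 3)) 1).exists_isMaxOn hSne hscont
  have hϑlo : ∀ y ∈ S, g₁ ϑlo / g₀ ϑlo ≤ g₁ y / g₀ y := fun y hy => hϑlo' hy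
  have hϑhi : ∀ y ∈ S, g₁ y / g₀ y ≤ g₁ ϑhi / g₀ ϑhi := fun y hy => hϑhi' hy
  set slo := g₁ ϑlo / g₀ ϑlo with hslodef
  set shi := g₁ ϑhi / g₀ ϑhi with hshidef
  have hslo : 0 < slo := div_pos (hpos _ hϑloS).1 (hg0pos _ hϑloS)
  have hshi : shi < 1 := (div_lt_one (hg0pos _ hϑhiS)).2 (hpos _ hϑhiS).2
  -- choice of ε
  set ε := min (1/5) (min (slo/3) ((1-shi)/3)) with hεdef
  have hε : 0 < ε := by
    apply lt_min (by norm_num)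
    exact lt_min (by positivity) (by linarith)
  have hε5 : ε ≤ 1/5 := min_le_left _ _
  have hεlo : 3*ε ≤ slo := by
    have h1 : ε ≤ slo/3 := le_trans (min_le_right _ _) (min_le_left _ _)
    linarith
  have hεhi : 3*ε ≤ 1 - shi := by
    have h1 : ε ≤ (1-shi)/3 := le_trans (min_le_right _ _) (min_le_right _ _)
    linarith
  -- the four bump profiles
  set H1 := mmH (ε/2) ε with hH1def
  set H2 := mmH ε (2*ε) with hH2def
  set H3 := mmH (1-2*ε) (1-ε) with hH3def
  set H4 := mmH (1-ε) (1-ε/2) with hH4def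
  set K1 := mmK (ε/2) ε with hK1def
  set K2 := mmK ε (2*ε) with hK2def
  set K3 := mmK (1-2*ε) (1-ε) with hK3def
  set K4 := mmK (1-ε) (1-ε/2) with hK4def
  have hb1p : (0:ℝ) ≤ ε/2 ∧ ε/2 < ε ∧ ε ≤ 1 := ⟨by linarith, by linarith, by linarith⟩
  have hb2p : (0:ℝ) ≤ ε ∧ ε < 2*ε ∧ 2*ε ≤ 1 := ⟨by linarith, by linarith, by linarith⟩
  have hb3p : (0:ℝ) ≤ 1-2*ε ∧ 1-2*ε < 1-ε ∧ 1-ε ≤ 1 := ⟨by linarith, by linarith, by linarith⟩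
  have hb4p : (0:ℝ) ≤ 1-ε ∧ 1-ε < 1-ε/2 ∧ 1-ε/2 ≤ 1 := ⟨by linarith, by linarith, by linarith⟩
  have hH1 : 0 < H1 := mmH_pos hb1p.1 hb1p.2.1 hb1p.2.2
  have hH2 : 0 < H2 := mmH_pos hb2p.1 hb2p.2.1 hb2p.2.2
  have hH3 : 0 < H3 := mmH_pos hb3p.1 hb3p.2.1 hb3p.2.2
  have hH4 : 0 < H4 := mmH_pos hb4p.1 hb4p.2.1 hb4p.2.2
  have hr1 : 1 - 2*ε ≤ K1/H1 := by
    have := mmK_ge hb1p.1 hb1p.2.1 hb1p.2.2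
    rw [le_div_iff₀ hH1]
    nlinarith [hH1]
  have hr2 : 1 - 2*ε ≤ K2/H2 := by
    have := mmK_ge hb2p.1 hb2p.2.1 hb2p.2.2
    rw [le_div_iff₀ hH2]
    nlinarith [hH2]
  have hr3 : K3/H3 ≤ 2*ε := by
    have := mmK_le hb3p.1 hb3p.2.1 hb3p.2.2
    rw [div_le_iff₀ hH3]
    nlinarith [hH3]
  have hr4 : K4/H4 ≤ 2*ε := by
    have := mmK_le hb4p.1 hb4p.2.1 hb4p.2.2
    rw [div_le_iff₀ hH4]
    nlinarith [hH4]
  -- the two cap directions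
  set e1 : EuclideanSpace ℝ (Fin 3) := EuclideanSpace.single (0:Fin 3) (1:ℝ) with he1def
  set e2 : EuclideanSpace ℝ (Fin 3) := EuclideanSpace.single (1:Fin 3) (1:ℝ) with he2def
  have he1S : e1 ∈ S := by
    rw [hSdef, mem_sphere_zero_iff_norm, he1def, EuclideanSpace.norm_single]; norm_num
  have he2S : e2 ∈ S := by
    rw [hSdef, mem_sphere_zero_iff_norm, he2def, EuclideanSpace.norm_single]; norm_num
  have he1n : ‖e1‖ = 1 := by rw [he1def, EuclideanSpace.norm_single]; norm_num
  have he2n : ‖e2‖ = 1 := by rw [he2def, EuclideanSpace.norm_single]; norm_num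
  have he12 : ⟪e1, e2⟫ = (0:ℝ) := by
    rw [he1def, he2def]
    simp [EuclideanSpace.inner_single_left, EuclideanSpace.single_apply]
  -- cutoffs
  set χ1 : EuclideanSpace ℝ (Fin 3) → ℝ := fun ϑ => max 0 (min ‖ϑ - e1‖ ‖ϑ + e1‖ - 1/4) with hχ1def
  set χ2 : EuclideanSpace ℝ (Fin 3) → ℝ := fun ϑ => max 0 (min ‖ϑ - e2‖ ‖ϑ + e2‖ - 1/4) with hχ2def
  have hχ1c : Continuous χ1 := by
    rw [hχ1def]
    exact continuous_const.max
      ((((continuous_id.sub continuous_const).norm.min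
        ((continuous_id.add continuous_const).norm)).sub continuous_const))
  have hχ2c : Continuous χ2 := by
    rw [hχ2def]
    exact continuous_const.max
      ((((continuous_id.sub continuous_const).norm.min
        ((continuous_id.add continuous_const).norm)).sub continuous_const))
  have hχ1n : ∀ ϑ, 0 ≤ χ1 ϑ := fun ϑ => le_max_left _ _
  have hχ2n : ∀ ϑ, 0 ≤ χ2 ϑ := fun ϑ => le_max_left _ _
  have hχ1z : ∀ ϑ, (‖ϑ - e1‖ ≤ 1/4 ∨ ‖ϑ + e1‖ ≤ 1/4) → χ1 ϑ = 0 := by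
    intro ϑ h
    have hm : min ‖ϑ - e1‖ ‖ϑ + e1‖ - 1/4 ≤ 0 := by
      rcases h with h|h
      · have := min_le_left ‖ϑ - e1‖ ‖ϑ + e1‖; linarith
      · have := min_le_right ‖ϑ - e1‖ ‖ϑ + e1‖; linarith
    exact max_eq_left hm
  have hχ2z : ∀ ϑ, (‖ϑ - e2‖ ≤ 1/4 ∨ ‖ϑ + e2‖ ≤ 1/4) → χ2 ϑ = 0 := by
    intro ϑ h
    have hm : min ‖ϑ - e2‖ ‖ϑ + e2‖ - 1/4 ≤ 0 := by
      rcases h with h|h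
      · have := min_le_left ‖ϑ - e2‖ ‖ϑ + e2‖; linarith
      · have := min_le_right ‖ϑ - e2‖ ‖ϑ + e2‖; linarith
    exact max_eq_left hm
  have hsumpos : ∀ ϑ ∈ S, 0 < χ1 ϑ + χ2 ϑ := by
    intro ϑ hϑ
    by_contra hcon
    push_neg at hcon
    have h1 : χ1 ϑ = 0 := le_antisymm (by linarith [hχ2n ϑ, hχ1n ϑ]) (hχ1n ϑ)
    have h2 : χ2 ϑ = 0 := le_antisymm (by linarith [hχ2n ϑ, hχ1n ϑ]) (hχ2n ϑ)
    have hm1 : min ‖ϑ - e1‖ ‖ϑ + e1‖ ≤ 1/4 := by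
      by_contra hm
      push_neg at hm
      have : χ1 ϑ ≥ min ‖ϑ - e1‖ ‖ϑ + e1‖ - 1/4 := le_max_right _ _
      rw [h1] at this; linarith
    have hm2 : min ‖ϑ - e2‖ ‖ϑ + e2‖ ≤ 1/4 := by
      by_contra hm
      push_neg at hm
      have : χ2 ϑ ≥ min ‖ϑ - e2‖ ‖ϑ + e2‖ - 1/4 := le_max_right _ _
      rw [h2] at this; linarith
    have hm1' : ‖ϑ - e1‖ ≤ 1/4 ∨ ‖ϑ - -e1‖ ≤ 1/4 := by
      rw [sub_neg_eq_add]; exact min_le_iff.mp hm1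
    have hm2' : ‖ϑ - e2‖ ≤ 1/4 ∨ ‖ϑ - -e2‖ ≤ 1/4 := by
      rw [sub_neg_eq_add]; exact min_le_iff.mp hm2
    have hne1 : ‖(-e1 : EuclideanSpace ℝ (Fin 3))‖ = 1 := by rw [norm_neg]; exact he1n
    have hne2 : ‖(-e2 : EuclideanSpace ℝ (Fin 3))‖ = 1 := by rw [norm_neg]; exact he2n
    rcases hm1' with h1'|h1' <;> rcases hm2' with h2'|h2'
    · exact mm_orth_far he1n he2n he12 h1' h2'
    · exact mm_orth_far he1n hne2 (by rw [inner_neg_right, he12, neg_zero]) h1' h2'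
    · exact mm_orth_far hne1 he2n (by rw [inner_neg_left, he12, neg_zero]) h1' h2'
    · exact mm_orth_far hne1 hne2 (by rw [inner_neg_left, inner_neg_right, he12, neg_zero, neg_zero]) h1' h2'
    -- the weight functions
  set sf : EuclideanSpace ℝ (Fin 3) → ℝ := fun ϑ => g₁ ϑ / g₀ ϑ with hsfdef
  set A1 : EuclideanSpace ℝ (Fin 3) → ℝ := fun ϑ => χ1 ϑ / (χ1 ϑ + χ2 ϑ) with hA1def
  set A2 : EuclideanSpace ℝ (Fin 3) → ℝ := fun ϑ => χ2 ϑ / (χ1 ϑ + χ2 ϑ) with hA2def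
  set rtop : EuclideanSpace ℝ (Fin 3) → ℝ :=
    fun ϑ => A1 ϑ * (K1/H1) + A2 ϑ * (K2/H2) with hrtopdef
  set rbot : EuclideanSpace ℝ (Fin 3) → ℝ :=
    fun ϑ => A2 ϑ * (K3/H3) + A1 ϑ * (K4/H4) with hrbotdef
  set T : EuclideanSpace ℝ (Fin 3) → ℝ :=
    fun ϑ => (sf ϑ - rbot ϑ) / (rtop ϑ - rbot ϑ) with hTdef
  set u1 : EuclideanSpace ℝ (Fin 3) → ℝ := fun ϑ => g₀ ϑ * T ϑ * A1 ϑ / H1 with hu1def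
  set u2 : EuclideanSpace ℝ (Fin 3) → ℝ := fun ϑ => g₀ ϑ * T ϑ * A2 ϑ / H2 with hu2def
  set u3 : EuclideanSpace ℝ (Fin 3) → ℝ := fun ϑ => g₀ ϑ * (1 - T ϑ) * A2 ϑ / H3 with hu3def
  set u4 : EuclideanSpace ℝ (Fin 3) → ℝ := fun ϑ => g₀ ϑ * (1 - T ϑ) * A1 ϑ / H4 with hu4def
  -- pointwise facts about the weights
  have hA1n : ∀ ϑ ∈ S, 0 ≤ A1 ϑ := fun ϑ hϑ => div_nonneg (hχ1n ϑ) (hsumpos ϑ hϑ).le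
  have hA2n : ∀ ϑ ∈ S, 0 ≤ A2 ϑ := fun ϑ hϑ => div_nonneg (hχ2n ϑ) (hsumpos ϑ hϑ).le
  have hAsum : ∀ ϑ ∈ S, A1 ϑ + A2 ϑ = 1 := by
    intro ϑ hϑ
    simp only [hA1def, hA2def]
    rw [← add_div, div_self (hsumpos ϑ hϑ).ne']
  have hsbound : ∀ ϑ ∈ S, slo ≤ sf ϑ ∧ sf ϑ ≤ shi := fun ϑ hϑ => ⟨hϑlo ϑ hϑ, hϑhi ϑ hϑ⟩
  have hrtopb : ∀ ϑ ∈ S, 1 - 2*ε ≤ rtop ϑ := by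
    intro ϑ hϑ
    have h1 := hA1n ϑ hϑ; have h2 := hA2n ϑ hϑ; have h3 := hAsum ϑ hϑ
    simp only [hrtopdef]
    nlinarith [hr1, hr2]
  have hrbotb : ∀ ϑ ∈ S, rbot ϑ ≤ 2*ε := by
    intro ϑ hϑ
    have h1 := hA1n ϑ hϑ; have h2 := hA2n ϑ hϑ; have h3 := hAsum ϑ hϑ
    simp only [hrbotdef]
    nlinarith [hr3, hr4]
  have hDpos : ∀ ϑ ∈ S, 0 < rtop ϑ - rbot ϑ := by
    intro ϑ hϑ
    have h1 := hrtopb ϑ hϑ; have h2 := hrbotb ϑ hϑ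
    linarith
  have hT0 : ∀ ϑ ∈ S, 0 ≤ T ϑ := by
    intro ϑ hϑ
    have h1 := (hsbound ϑ hϑ).1; have h2 := hrbotb ϑ hϑ
    simp only [hTdef]
    apply div_nonneg _ (hDpos ϑ hϑ).le
    linarith
  have hT1 : ∀ ϑ ∈ S, T ϑ ≤ 1 := by
    intro ϑ hϑ
    have h1 := (hsbound ϑ hϑ).2; have h2 := hrtopb ϑ hϑ
    simp only [hTdef]
    rw [div_le_one (hDpos ϑ hϑ)]
    linarith
  have hu1n : ∀ ϑ ∈ S, 0 ≤ u1 ϑ := by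
    intro ϑ hϑ
    simp only [hu1def]
    exact div_nonneg (mul_nonneg (mul_nonneg (hg0pos ϑ hϑ).le (hT0 ϑ hϑ)) (hA1n ϑ hϑ)) hH1.le
  have hu2n : ∀ ϑ ∈ S, 0 ≤ u2 ϑ := by
    intro ϑ hϑ
    simp only [hu2def]
    exact div_nonneg (mul_nonneg (mul_nonneg (hg0pos ϑ hϑ).le (hT0 ϑ hϑ)) (hA2n ϑ hϑ)) hH2.le
  have hu3n : ∀ ϑ ∈ S, 0 ≤ u3 ϑ := by
    intro ϑ hϑ
    simp only [hu3def]
    exact div_nonneg (mul_nonneg (mul_nonneg (hg0pos ϑ hϑ).le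
      (by linarith [hT1 ϑ hϑ])) (hA2n ϑ hϑ)) hH3.le
  have hu4n : ∀ ϑ ∈ S, 0 ≤ u4 ϑ := by
    intro ϑ hϑ
    simp only [hu4def]
    exact div_nonneg (mul_nonneg (mul_nonneg (hg0pos ϑ hϑ).le
      (by linarith [hT1 ϑ hϑ])) (hA1n ϑ hϑ)) hH4.le
  -- continuity of the weights
  have hA1c : ContinuousOn A1 S := by
    rw [hA1def]
    exact (hχ1c.continuousOn.div (hχ1c.add hχ2c).continuousOn
      (fun ϑ hϑ => (hsumpos ϑ hϑ).ne'))
  have hA2c : ContinuousOn A2 S := by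
    rw [hA2def]
    exact (hχ2c.continuousOn.div (hχ1c.add hχ2c).continuousOn
      (fun ϑ hϑ => (hsumpos ϑ hϑ).ne'))
  have hrtopc : ContinuousOn rtop S := by
    rw [hrtopdef]
    exact (hA1c.mul continuousOn_const).add (hA2c.mul continuousOn_const)
  have hrbotc : ContinuousOn rbot S := by
    rw [hrbotdef]
    exact (hA2c.mul continuousOn_const).add (hA1c.mul continuousOn_const)
  have hTc : ContinuousOn T S := by
    rw [hTdef]
    exact (hscont.sub hrbotc).div (hrtopc.sub hrbotc) (fun ϑ hϑ => (hDpos ϑ hϑ).ne')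
  have hu1c : ContinuousOn u1 S := by
    rw [hu1def]
    exact ((hg₀.mul hTc).mul hA1c).div_const H1
  have hu2c : ContinuousOn u2 S := by
    rw [hu2def]
    exact ((hg₀.mul hTc).mul hA2c).div_const H2
  have hu3c : ContinuousOn u3 S := by
    rw [hu3def]
    exact ((hg₀.mul (continuousOn_const.sub hTc)).mul hA2c).div_const H3
  have hu4c : ContinuousOn u4 S := by
    rw [hu4def]
    exact ((hg₀.mul (continuousOn_const.sub hTc)).mul hA1c).div_const H4
  -- cap vanishing of the weights
  have hcap1 : ∀ ϑ, (‖ϑ - e1‖ ≤ 1/4 ∨ ‖ϑ + e1‖ ≤ 1/4) → u1 ϑ = 0 ∧ u4 ϑ = 0 := by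
    intro ϑ h
    have hz : χ1 ϑ = 0 := hχ1z ϑ h
    have hA : A1 ϑ = 0 := by simp only [hA1def]; rw [hz, zero_div]
    constructor
    · simp only [hu1def]; rw [hA, mul_zero, zero_div]
    · simp only [hu4def]; rw [hA, mul_zero, zero_div]
  have hcap2 : ∀ ϑ, (‖ϑ - e2‖ ≤ 1/4 ∨ ‖ϑ + e2‖ ≤ 1/4) → u2 ϑ = 0 ∧ u3 ϑ = 0 := by
    intro ϑ h
    have hz : χ2 ϑ = 0 := hχ2z ϑ h
    have hA : A2 ϑ = 0 := by simp only [hA2def]; rw [hz, zero_div]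
    constructor
    · simp only [hu2def]; rw [hA, mul_zero, zero_div]
    · simp only [hu3def]; rw [hA, mul_zero, zero_div]
  -- the two moment identities
  have hM : ∀ ϑ ∈ S, (u1 ϑ * H1 + u2 ϑ * H2 + u3 ϑ * H3 + u4 ϑ * H4 = g₀ ϑ) ∧
      (u1 ϑ * K1 + u2 ϑ * K2 + u3 ϑ * K3 + u4 ϑ * K4 = g₁ ϑ) := by
    intro ϑ hϑ
    have hg0 : g₀ ϑ ≠ 0 := (hg0pos ϑ hϑ).ne'
    have hAs := hAsum ϑ hϑ
    have hD : rtop ϑ - rbot ϑ ≠ 0 := (hDpos ϑ hϑ).ne'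
    have hTD : T ϑ * (rtop ϑ - rbot ϑ) = sf ϑ - rbot ϑ := by
      simp only [hTdef]
      exact div_mul_cancel₀ _ hD
    constructor
    · have f1' : u1 ϑ * H1 = g₀ ϑ * T ϑ * A1 ϑ := by
        simp only [hu1def]; exact div_mul_cancel₀ _ hH1.ne'
      have f2' : u2 ϑ * H2 = g₀ ϑ * T ϑ * A2 ϑ := by
        simp only [hu2def]; exact div_mul_cancel₀ _ hH2.ne'
      have f3' : u3 ϑ * H3 = g₀ ϑ * (1 - T ϑ) * A2 ϑ := by
        simp only [hu3def]; exact div_mul_cancel₀ _ hH3.ne'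
      have f4' : u4 ϑ * H4 = g₀ ϑ * (1 - T ϑ) * A1 ϑ := by
        simp only [hu4def]; exact div_mul_cancel₀ _ hH4.ne'
      rw [f1', f2', f3', f4']
      linear_combination g₀ ϑ * hAs
    · have f1' : u1 ϑ * K1 = g₀ ϑ * T ϑ * A1 ϑ * (K1/H1) := by
        simp only [hu1def]; rw [div_mul_eq_mul_div, mul_div_assoc]
      have f2' : u2 ϑ * K2 = g₀ ϑ * T ϑ * A2 ϑ * (K2/H2) := by
        simp only [hu2def]; rw [div_mul_eq_mul_div, mul_div_assoc]
      have f3' : u3 ϑ * K3 = g₀ ϑ * (1 - T ϑ) * A2 ϑ * (K3/H3) := by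
        simp only [hu3def]; rw [div_mul_eq_mul_div, mul_div_assoc]
      have f4' : u4 ϑ * K4 = g₀ ϑ * (1 - T ϑ) * A1 ϑ * (K4/H4) := by
        simp only [hu4def]; rw [div_mul_eq_mul_div, mul_div_assoc]
      rw [f1', f2', f3', f4']
      have hg1 : g₁ ϑ = g₀ ϑ * sf ϑ := by
        simp only [hsfdef]
        rw [mul_div_cancel₀ _ hg0]
      have hrt : rtop ϑ = A1 ϑ * (K1/H1) + A2 ϑ * (K2/H2) := by simp only [hrtopdef]
      have hrb : rbot ϑ = A2 ϑ * (K3/H3) + A1 ϑ * (K4/H4) := by simp only [hrbotdef]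
      rw [hg1]
      linear_combination g₀ ϑ * hTD - g₀ ϑ * T ϑ * hrt - g₀ ϑ * (1 - T ϑ) * hrb
    -- disjointness of the bump supports
  have hdisj : ∀ x : ℝ,
      (mmBump ε (2*ε) x = 0 ∧ mmBump (1-2*ε) (1-ε) x = 0 ∧ mmBump (1-ε) (1-ε/2) x = 0) ∨
      (mmBump (ε/2) ε x = 0 ∧ mmBump (1-2*ε) (1-ε) x = 0 ∧ mmBump (1-ε) (1-ε/2) x = 0) ∨
      (mmBump (ε/2) ε x = 0 ∧ mmBump ε (2*ε) x = 0 ∧ mmBump (1-ε) (1-ε/2) x = 0) ∨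
      (mmBump (ε/2) ε x = 0 ∧ mmBump ε (2*ε) x = 0 ∧ mmBump (1-2*ε) (1-ε) x = 0) := by
    intro x
    rcases le_or_gt x ε with h|h
    · exact Or.inl ⟨mmBump_zero_left h, mmBump_zero_left (by linarith),
        mmBump_zero_left (by linarith)⟩
    rcases le_or_gt x (1-2*ε) with h2|h2
    · exact Or.inr (Or.inl ⟨mmBump_zero_right h.le, mmBump_zero_left h2,
        mmBump_zero_left (by linarith)⟩)
    rcases le_or_gt x (1-ε) with h3|h3
    · exact Or.inr (Or.inr (Or.inl ⟨mmBump_zero_right (by linarith),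
        mmBump_zero_right (by linarith), mmBump_zero_left h3⟩))
    · exact Or.inr (Or.inr (Or.inr ⟨mmBump_zero_right (by linarith),
        mmBump_zero_right (by linarith), mmBump_zero_right h3.le⟩))
  -- the function and its square root
  have hsqrt : ∀ ϑ ∈ S, ∀ x : ℝ,
      Real.sqrt (u1 ϑ * (mmBump (ε/2) ε x)^2 + u2 ϑ * (mmBump ε (2*ε) x)^2
        + u3 ϑ * (mmBump (1-2*ε) (1-ε) x)^2 + u4 ϑ * (mmBump (1-ε) (1-ε/2) x)^2)
      = Real.sqrt (u1 ϑ) * mmBump (ε/2) ε x + Real.sqrt (u2 ϑ) * mmBump ε (2*ε) x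
        + Real.sqrt (u3 ϑ) * mmBump (1-2*ε) (1-ε) x
        + Real.sqrt (u4 ϑ) * mmBump (1-ε) (1-ε/2) x := by
    intro ϑ hϑ x
    exact mm_sqrt_four (hu1n ϑ hϑ) (hu2n ϑ hϑ) (hu3n ϑ hϑ) (hu4n ϑ hϑ)
      (mmBump_nonneg _ _ _) (mmBump_nonneg _ _ _) (mmBump_nonneg _ _ _) (mmBump_nonneg _ _ _)
      (hdisj x)
  refine ⟨1/4, by norm_num,
    fun x ϑ => u1 ϑ * (mmBump (ε/2) ε x)^2 + u2 ϑ * (mmBump ε (2*ε) x)^2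
      + u3 ϑ * (mmBump (1-2*ε) (1-ε) x)^2 + u4 ϑ * (mmBump (1-ε) (1-ε/2) x)^2,
    ?_, ?_, ?_, ?_, ?_, ?_, ?_⟩
  -- nonnegativity
  · intro x _ ϑ hϑ
    have h1 := hu1n ϑ hϑ; have h2 := hu2n ϑ hϑ; have h3 := hu3n ϑ hϑ; have h4 := hu4n ϑ hϑ
    have := sq_nonneg (mmBump (ε/2) ε x)
    positivity
  -- (a) joint continuity of √f
  · have hG : ContinuousOn (fun p : ℝ × EuclideanSpace ℝ (Fin 3) =>
      Real.sqrt (u1 p.2) * mmBump (ε/2) ε p.1 + Real.sqrt (u2 p.2) * mmBump ε (2*ε) p.1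
        + Real.sqrt (u3 p.2) * mmBump (1-2*ε) (1-ε) p.1
        + Real.sqrt (u4 p.2) * mmBump (1-ε) (1-ε/2) p.1)
        (Set.Icc (0:ℝ) 1 ×ˢ S) := by
      have hterm : ∀ (u : EuclideanSpace ℝ (Fin 3) → ℝ) (a c : ℝ), ContinuousOn u S →
          ContinuousOn (fun p : ℝ × EuclideanSpace ℝ (Fin 3) =>
            Real.sqrt (u p.2) * mmBump a c p.1)
            (Set.Icc (0:ℝ) 1 ×ˢ S) := by
        intro u a c hu
        apply ContinuousOn.mul
        · exact Real.continuous_sqrt.comp_continuousOn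
            (hu.comp continuous_snd.continuousOn (fun p hp => hp.2))
        · exact ((mmBump_smooth a c).continuous.comp continuous_fst).continuousOn
      exact ((((hterm u1 _ _ hu1c).add (hterm u2 _ _ hu2c)).add
        (hterm u3 _ _ hu3c)).add (hterm u4 _ _ hu4c))
    exact hG.congr (fun p hp => hsqrt p.2 hp.2 p.1)
  -- (a) smoothness in x
  · intro ϑ hϑ
    have hfe : (fun x => Real.sqrt (u1 ϑ * (mmBump (ε/2) ε x)^2 + u2 ϑ * (mmBump ε (2*ε) x)^2
        + u3 ϑ * (mmBump (1-2*ε) (1-ε) x)^2 + u4 ϑ * (mmBump (1-ε) (1-ε/2) x)^2))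
        = fun x => Real.sqrt (u1 ϑ) * mmBump (ε/2) ε x + Real.sqrt (u2 ϑ) * mmBump ε (2*ε) x
          + Real.sqrt (u3 ϑ) * mmBump (1-2*ε) (1-ε) x
          + Real.sqrt (u4 ϑ) * mmBump (1-ε) (1-ε/2) x := funext (hsqrt ϑ hϑ)
    rw [hfe]
    exact ((((contDiff_const.mul (mmBump_smooth _ _)).add
      (contDiff_const.mul (mmBump_smooth _ _))).add
      (contDiff_const.mul (mmBump_smooth _ _))).add
      (contDiff_const.mul (mmBump_smooth _ _))).contDiffOn
  -- (a) joint continuity of the x-derivatives of √f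
  · intro n
    have hI : ∀ a c : ℝ, ContinuousOn (iteratedDerivWithin n (mmBump a c) (Set.Icc (0:ℝ) 1))
        (Set.Icc (0:ℝ) 1) := by
      intro a c
      exact ((mmBump_smooth a c).contDiffOn).continuousOn_iteratedDerivWithin
        (mod_cast le_top) (uniqueDiffOn_Icc zero_lt_one)
    have hG : ContinuousOn (fun p : ℝ × EuclideanSpace ℝ (Fin 3) =>
      Real.sqrt (u1 p.2) * iteratedDerivWithin n (mmBump (ε/2) ε) (Set.Icc (0:ℝ) 1) p.1
        + Real.sqrt (u2 p.2) * iteratedDerivWithin n (mmBump ε (2*ε)) (Set.Icc (0:ℝ) 1) p.1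
        + Real.sqrt (u3 p.2) * iteratedDerivWithin n (mmBump (1-2*ε) (1-ε)) (Set.Icc (0:ℝ) 1) p.1
        + Real.sqrt (u4 p.2) * iteratedDerivWithin n (mmBump (1-ε) (1-ε/2)) (Set.Icc (0:ℝ) 1) p.1)
        (Set.Icc (0:ℝ) 1 ×ˢ S) := by
      have hterm : ∀ (u : EuclideanSpace ℝ (Fin 3) → ℝ) (a c : ℝ), ContinuousOn u S →
          ContinuousOn (fun p : ℝ × EuclideanSpace ℝ (Fin 3) =>
            Real.sqrt (u p.2) * iteratedDerivWithin n (mmBump a c) (Set.Icc (0:ℝ) 1) p.1)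
            (Set.Icc (0:ℝ) 1 ×ˢ S) := by
        intro u a c hu
        apply ContinuousOn.mul
        · exact Real.continuous_sqrt.comp_continuousOn
            (hu.comp continuous_snd.continuousOn (fun p hp => hp.2))
        · exact (hI a c).comp continuous_fst.continuousOn (fun p hp => hp.1)
      exact ((((hterm u1 _ _ hu1c).add (hterm u2 _ _ hu2c)).add
        (hterm u3 _ _ hu3c)).add (hterm u4 _ _ hu4c))
    apply hG.congr
    · intro p hp
      have hfe : (fun x => Real.sqrt (u1 p.2 * (mmBump (ε/2) ε x)^2
          + u2 p.2 * (mmBump ε (2*ε) x)^2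
          + u3 p.2 * (mmBump (1-2*ε) (1-ε) x)^2 + u4 p.2 * (mmBump (1-ε) (1-ε/2) x)^2))
          = fun x => Real.sqrt (u1 p.2) * mmBump (ε/2) ε x
            + Real.sqrt (u2 p.2) * mmBump ε (2*ε) x
            + Real.sqrt (u3 p.2) * mmBump (1-2*ε) (1-ε) x
            + Real.sqrt (u4 p.2) * mmBump (1-ε) (1-ε/2) x := funext (hsqrt p.2 hp.2)
      show iteratedDerivWithin n (fun x => Real.sqrt (u1 p.2 * (mmBump (ε/2) ε x)^2
          + u2 p.2 * (mmBump ε (2*ε) x)^2 + u3 p.2 * (mmBump (1-2*ε) (1-ε) x)^2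
          + u4 p.2 * (mmBump (1-ε) (1-ε/2) x)^2)) (Set.Icc (0:ℝ) 1) p.1 = _
      rw [hfe, mm_iterDW_lin4 n hp.1 (mmBump_smooth _ _) (mmBump_smooth _ _)
        (mmBump_smooth _ _) (mmBump_smooth _ _)]
  -- (b) infinite-order vanishing at x = 1
  · intro n ϑ hϑ
    have hz : ∀ y ∈ Set.Ioi (1 - ε/2), u1 ϑ * (mmBump (ε/2) ε y)^2
        + u2 ϑ * (mmBump ε (2*ε) y)^2 + u3 ϑ * (mmBump (1-2*ε) (1-ε) y)^2
        + u4 ϑ * (mmBump (1-ε) (1-ε/2) y)^2 = 0 := by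
      intro y hy
      have hy' : 1 - ε/2 < y := hy
      rw [mmBump_zero_right (show ε ≤ y by linarith),
        mmBump_zero_right (show 2*ε ≤ y by linarith),
        mmBump_zero_right (show 1-ε ≤ y by linarith),
        mmBump_zero_right (show 1-ε/2 ≤ y by linarith)]
      ring
    apply mm_iterDW_zero n (Set.mem_Icc.mpr ⟨by norm_num, le_refl 1⟩)
    · have hmem : Set.Ioi (1 - ε/2) ∈ nhdsWithin (1:ℝ) (Set.Icc (0:ℝ) 1) :=
        mem_nhdsWithin_of_mem_nhds (Ioi_mem_nhds (by linarith))
      filter_upwards [hmem] with y hy using hz y hy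
    · exact hz 1 (by simp only [Set.mem_Ioi]; linarith)
  -- (c) vanishing on the caps
  · intro x _
    by_cases hmid : ε < x ∧ x < 1 - ε
    · refine ⟨e2, he2S, ?_⟩
      intro ϑ _ hcap
      obtain ⟨h2z, h3z⟩ := hcap2 ϑ hcap
      show u1 ϑ * (mmBump (ε/2) ε x)^2 + u2 ϑ * (mmBump ε (2*ε) x)^2
        + u3 ϑ * (mmBump (1-2*ε) (1-ε) x)^2 + u4 ϑ * (mmBump (1-ε) (1-ε/2) x)^2 = 0
      rw [mmBump_zero_right (le_of_lt hmid.1), mmBump_zero_left (le_of_lt hmid.2), h2z, h3z]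
      ring
    · refine ⟨e1, he1S, ?_⟩
      intro ϑ _ hcap
      obtain ⟨h1z, h4z⟩ := hcap1 ϑ hcap
      show u1 ϑ * (mmBump (ε/2) ε x)^2 + u2 ϑ * (mmBump ε (2*ε) x)^2
        + u3 ϑ * (mmBump (1-2*ε) (1-ε) x)^2 + u4 ϑ * (mmBump (1-ε) (1-ε/2) x)^2 = 0
      rw [h1z, h4z]
      rcases not_and_or.mp hmid with h|h
      · have hx : x ≤ ε := not_lt.mp h
        rw [mmBump_zero_left hx, mmBump_zero_left (show x ≤ 1-2*ε by linarith)]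
        ring
      · have hx : 1 - ε ≤ x := not_lt.mp h
        rw [mmBump_zero_right (show 2*ε ≤ x by linarith),
          mmBump_zero_right (show 1-ε ≤ x from hx)]
        ring
  -- (d) the two moments
  · intro ϑ hϑ
    have hi1 : IntervalIntegrable (fun x => u1 ϑ * (mmBump (ε/2) ε x)^2) volume 0 1 :=
      (continuous_const.mul (mmBump_sq_cont _ _)).intervalIntegrable 0 1
    have hi2 : IntervalIntegrable (fun x => u2 ϑ * (mmBump ε (2*ε) x)^2) volume 0 1 :=
      (continuous_const.mul (mmBump_sq_cont _ _)).intervalIntegrable 0 1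
    have hi3 : IntervalIntegrable (fun x => u3 ϑ * (mmBump (1-2*ε) (1-ε) x)^2) volume 0 1 :=
      (continuous_const.mul (mmBump_sq_cont _ _)).intervalIntegrable 0 1
    have hi4 : IntervalIntegrable (fun x => u4 ϑ * (mmBump (1-ε) (1-ε/2) x)^2) volume 0 1 :=
      (continuous_const.mul (mmBump_sq_cont _ _)).intervalIntegrable 0 1
    have hH1' : (∫ x in (0:ℝ)..1, (mmBump (ε/2) ε x)^2) = H1 := by rw [hH1def]; rfl
    have hH2' : (∫ x in (0:ℝ)..1, (mmBump ε (2*ε) x)^2) = H2 := by rw [hH2def]; rfl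
    have hH3' : (∫ x in (0:ℝ)..1, (mmBump (1-2*ε) (1-ε) x)^2) = H3 := by rw [hH3def]; rfl
    have hH4' : (∫ x in (0:ℝ)..1, (mmBump (1-ε) (1-ε/2) x)^2) = H4 := by rw [hH4def]; rfl
    constructor
    · rw [integral_add ((hi1.add hi2).add hi3) hi4, integral_add (hi1.add hi2) hi3,
        integral_add hi1 hi2, intervalIntegral.integral_const_mul, intervalIntegral.integral_const_mul, intervalIntegral.integral_const_mul,
        intervalIntegral.integral_const_mul, hH1', hH2', hH3', hH4']
      exact (hM ϑ hϑ).1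
    · have hinner : ∀ x : ℝ, (∫ y in (0:ℝ)..x, (u1 ϑ * (mmBump (ε/2) ε y)^2
          + u2 ϑ * (mmBump ε (2*ε) y)^2 + u3 ϑ * (mmBump (1-2*ε) (1-ε) y)^2
          + u4 ϑ * (mmBump (1-ε) (1-ε/2) y)^2))
          = u1 ϑ * mmB (ε/2) ε x + u2 ϑ * mmB ε (2*ε) x
            + u3 ϑ * mmB (1-2*ε) (1-ε) x + u4 ϑ * mmB (1-ε) (1-ε/2) x := by
        intro x
        have gi1 : IntervalIntegrable (fun y => u1 ϑ * (mmBump (ε/2) ε y)^2) volume 0 x :=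
          (continuous_const.mul (mmBump_sq_cont _ _)).intervalIntegrable 0 x
        have gi2 : IntervalIntegrable (fun y => u2 ϑ * (mmBump ε (2*ε) y)^2) volume 0 x :=
          (continuous_const.mul (mmBump_sq_cont _ _)).intervalIntegrable 0 x
        have gi3 : IntervalIntegrable (fun y => u3 ϑ * (mmBump (1-2*ε) (1-ε) y)^2) volume 0 x :=
          (continuous_const.mul (mmBump_sq_cont _ _)).intervalIntegrable 0 x
        have gi4 : IntervalIntegrable (fun y => u4 ϑ * (mmBump (1-ε) (1-ε/2) y)^2) volume 0 x :=
          (continuous_const.mul (mmBump_sq_cont _ _)).intervalIntegrable 0 x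
        rw [integral_add ((gi1.add gi2).add gi3) gi4, integral_add (gi1.add gi2) gi3,
          integral_add gi1 gi2, intervalIntegral.integral_const_mul, intervalIntegral.integral_const_mul, intervalIntegral.integral_const_mul,
          intervalIntegral.integral_const_mul]
        rfl
      simp only [hinner]
      have ji1 : IntervalIntegrable (fun x => u1 ϑ * mmB (ε/2) ε x) volume 0 1 :=
        (continuous_const.mul (mmB_cont _ _)).intervalIntegrable 0 1
      have ji2 : IntervalIntegrable (fun x => u2 ϑ * mmB ε (2*ε) x) volume 0 1 :=
        (continuous_const.mul (mmB_cont _ _)).intervalIntegrable 0 1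
      have ji3 : IntervalIntegrable (fun x => u3 ϑ * mmB (1-2*ε) (1-ε) x) volume 0 1 :=
        (continuous_const.mul (mmB_cont _ _)).intervalIntegrable 0 1
      have ji4 : IntervalIntegrable (fun x => u4 ϑ * mmB (1-ε) (1-ε/2) x) volume 0 1 :=
        (continuous_const.mul (mmB_cont _ _)).intervalIntegrable 0 1
      have hK1' : (∫ x in (0:ℝ)..1, mmB (ε/2) ε x) = K1 := by rw [hK1def]; rfl
      have hK2' : (∫ x in (0:ℝ)..1, mmB ε (2*ε) x) = K2 := by rw [hK2def]; rfl
      have hK3' : (∫ x in (0:ℝ)..1, mmB (1-2*ε) (1-ε) x) = K3 := by rw [hK3def]; rfl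
      have hK4' : (∫ x in (0:ℝ)..1, mmB (1-ε) (1-ε/2) x) = K4 := by rw [hK4def]; rfl
      rw [integral_add ((ji1.add ji2).add ji3) ji4, integral_add (ji1.add ji2) ji3,
        integral_add ji1 ji2, intervalIntegral.integral_const_mul, intervalIntegral.integral_const_mul, intervalIntegral.integral_const_mul,
        intervalIntegral.integral_const_mul, hK1', hK2', hK3', hK4']
      exact (hM ϑ hϑ).2
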